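/- Let n ≥ 1 and let ρ : ℝ → ℝ be a measurable function such that z ↦ z^k ρ(z) is Lebesgue integrable on ℝ for all 0 ≤ k ≤ 2n−2. Then the Hankel determinant det(∫_ℝ z^{i+j} ρ(z) dz)_{0≤i,j≤n−1} equals (1/n!) ∫_{ℝ^n} Δ_n(z)^2 ∏_{ℓ=1}^n ρ(z_ℓ) dz_1 ⋯ dz_n, where Δ_n(z) = ∏_{1≤j<k≤n}(z_k − z_j). -/

import Mathlib

/-!
Andréief's identity: expanding both determinants in `det (f i (x k)) * det (g j (x k))` over
permutations `σ, τ`, each term is a product of functions of single coordinates, so Fubini turns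
its integral into `∏ k, ∫ f (σ k) * g (τ k)`. Reindexing by `σ * τ⁻¹` shows that every `τ`
contributes `det (∫ f i * g j)`, whence the factor `n!`. The theorem is the case `f i z = z ^ i`,
`g j z = z ^ j * ρ z`, where the first determinant is the Vandermonde one.
-/

open MeasureTheory Equiv

namespace Matrix

variable {ι R : Type*} [Fintype ι] [DecidableEq ι] [CommRing R]

theorem sum_perm_sign_mul_sign_mul_prod (M : Matrix ι ι R) (τ : Perm ι) :
    ∑ σ : Perm ι, ((Perm.sign σ : ℤ) : R) * ((Perm.sign τ : ℤ) : R) * ∏ i, M (σ i) (τ i)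
      = M.det := by
  rw [det_apply', ← Equiv.sum_comp (Equiv.mulRight τ)]
  refine Finset.sum_congr rfl fun σ _ => ?_
  have hsign : ((Perm.sign (σ * τ) : ℤ) : R) * ((Perm.sign τ : ℤ) : R) = (Perm.sign σ : ℤ) := by
    rw [← Int.cast_mul, ← Units.val_mul, Perm.sign_mul, mul_assoc, Int.units_mul_self, mul_one]
  rw [coe_mulRight, hsign, ← Equiv.prod_comp τ (fun i => M (σ i) i)]
  rfl

theorem sum_perm_sum_perm_sign_mul_sign_mul_prod (M : Matrix ι ι R) :
    ∑ σ : Perm ι, ∑ τ : Perm ι,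
        ((Perm.sign σ : ℤ) : R) * ((Perm.sign τ : ℤ) : R) * ∏ i, M (σ i) (τ i)
      = (Fintype.card ι).factorial * M.det := by
  rw [Finset.sum_comm]
  simp only [sum_perm_sign_mul_sign_mul_prod, Finset.sum_const, Finset.card_univ,
    Fintype.card_perm, nsmul_eq_mul]

theorem det_mul_det_eq_sum_perm_sum_perm (A B : Matrix ι ι R) :
    A.det * B.det = ∑ σ : Perm ι, ∑ τ : Perm ι,
      ((Perm.sign σ : ℤ) : R) * ((Perm.sign τ : ℤ) : R) * ∏ k, A (σ k) k * B (τ k) k := by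
  rw [det_apply', det_apply', Finset.sum_mul_sum]
  refine Finset.sum_congr rfl fun σ _ => Finset.sum_congr rfl fun τ _ => ?_
  rw [Finset.prod_mul_distrib]
  ring

end Matrix

section Andreief

variable {ι α 𝕜 : Type*} [Fintype ι] [DecidableEq ι] [MeasurableSpace α] [RCLike 𝕜]

theorem integral_det_mul_det_eq_factorial_mul_det (μ : Measure α) [SigmaFinite μ]
    (f g : ι → α → 𝕜) (hfg : ∀ i j, Integrable (fun x => f i x * g j x) μ) :
    ∫ x : ι → α, (Matrix.of fun i k => f i (x k)).det * (Matrix.of fun i k => g i (x k)).det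
        ∂(Measure.pi fun _ => μ)
      = (Fintype.card ι).factorial * (Matrix.of fun i j => ∫ x, f i x * g j x ∂μ).det := by
  have hterm : ∀ σ τ : Perm ι, Integrable
      (fun x : ι → α => ∏ k, f (σ k) (x k) * g (τ k) (x k)) (Measure.pi fun _ => μ) :=
    fun σ τ => Integrable.fintype_prod (f := fun k x => f (σ k) x * g (τ k) x)
      fun k => hfg _ _
  simp only [Matrix.det_mul_det_eq_sum_perm_sum_perm, Matrix.of_apply]
  rw [← Matrix.sum_perm_sum_perm_sign_mul_sign_mul_prod,
    integral_finsetSum _ fun σ _ => integrable_finsetSum _ fun τ _ => (hterm σ τ).const_mul _]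
  refine Finset.sum_congr rfl fun σ _ => ?_
  rw [integral_finsetSum _ fun τ _ => (hterm σ τ).const_mul _]
  refine Finset.sum_congr rfl fun τ _ => ?_
  rw [integral_const_mul, integral_fintype_prod_eq_prod (fun k x => f (σ k) x * g (τ k) x)]
  rfl

end Andreief

theorem det_pow_mul_det_pow_mul_eq_vandermonde_sq {R : Type*} [CommRing R] {n : ℕ} (ρ : R → R)
    (z : Fin n → R) :
    (Matrix.of fun (i k : Fin n) => z k ^ (i : ℕ)).det
        * (Matrix.of fun (i k : Fin n) => z k ^ (i : ℕ) * ρ (z k)).det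
      = (∏ j : Fin n, ∏ k ∈ Finset.Ioi j, (z k - z j)) ^ 2 * ∏ ℓ : Fin n, ρ (z ℓ) := by
  have hV : (Matrix.of fun (i k : Fin n) => z k ^ (i : ℕ)).det
      = ∏ j : Fin n, ∏ k ∈ Finset.Ioi j, (z k - z j) := by
    rw [← Matrix.det_vandermonde, ← Matrix.det_transpose]
    rfl
  have hVρ : (Matrix.of fun (i k : Fin n) => z k ^ (i : ℕ) * ρ (z k)).det
      = (∏ ℓ : Fin n, ρ (z ℓ)) * ∏ j : Fin n, ∏ k ∈ Finset.Ioi j, (z k - z j) := by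
    rw [← hV, ← Matrix.det_mul_row]
    simp only [Matrix.of_apply, mul_comm]
  rw [hV, hVρ]
  ring

theorem hankel_det_eq_integral_general
    (n : ℕ) (ρ : ℝ → ℝ)
    (hint : ∀ k : ℕ, k ≤ 2 * n - 2 → Integrable (fun z : ℝ => z ^ k * ρ z)) :
    Matrix.det (Matrix.of fun i j : Fin n =>
        ∫ z : ℝ, z ^ ((i : ℕ) + (j : ℕ)) * ρ z)
      = (1 / n.factorial : ℝ) *
          ∫ z : Fin n → ℝ,
            (∏ j : Fin n, ∏ k ∈ Finset.Ioi j, (z k - z j)) ^ 2 *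
              ∏ ℓ : Fin n, ρ (z ℓ) := by
  have hmoment : ∀ (i j : Fin n) (z : ℝ), z ^ (i : ℕ) * (z ^ (j : ℕ) * ρ z)
      = z ^ ((i : ℕ) + (j : ℕ)) * ρ z := fun _ _ _ => by ring
  have hmoment_int (i j : Fin n) :
      Integrable (fun z : ℝ => z ^ (i : ℕ) * (z ^ (j : ℕ) * ρ z)) := by
    simpa only [hmoment] using hint _ (by omega)
  have handreief := integral_det_mul_det_eq_factorial_mul_det volume
    (fun (i : Fin n) z => z ^ (i : ℕ)) (fun j z => z ^ (j : ℕ) * ρ z) hmoment_int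
  simp only [det_pow_mul_det_pow_mul_eq_vandermonde_sq, hmoment, Fintype.card_fin] at handreief
  rw [volume_pi, handreief, ← mul_assoc, one_div,
    inv_mul_cancel₀ (by positivity : (n.factorial : ℝ) ≠ 0), one_mul]

/-- for a single measurable weight `ρ` on `ℝ` with integrable moments
up to order `2n-2`, the Hankel determinant `det (∫ z^{i+j} ρ z dz)` equals
`(1/n!) ∫_{ℝ^n} Δₙ(z)² ∏ ρ(z_ℓ) dz`, where `Δₙ(z) = ∏_{j<k} (z k − z j)`. -/
theorem hankel_det_eq_integral
    (n : ℕ) (hn : 1 ≤ n) (ρ : ℝ → ℝ) (hmeas : Measurable ρ)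
    (hint : ∀ k : ℕ, k ≤ 2 * n - 2 → Integrable (fun z : ℝ => z ^ k * ρ z)) :
    Matrix.det (Matrix.of fun i j : Fin n =>
        ∫ z : ℝ, z ^ ((i : ℕ) + (j : ℕ)) * ρ z)
      = (1 / n.factorial : ℝ) *
          ∫ z : Fin n → ℝ,
            (∏ j : Fin n, ∏ k ∈ Finset.Ioi j, (z k - z j)) ^ 2 *
              ∏ ℓ : Fin n, ρ (z ℓ) :=
  hankel_det_eq_integral_general n ρ hint
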